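/- Let L be a finite graded distributive lattice and let K be a full-length sublattice of L. For each join-irreducible x of L, let w_x denote the unique minimal element of {y ∈ K : x ≤ y}. Then the map x ↦ w_x is a bijection from the set of join-irreducible elements of L onto the set of join-irreducible elements of K, and it is order-preserving: if x ≤ x' in L (both join irreducible in L), then w_x ≤ w_{x'}. -/

import Mathlib

/-!
Comparing the two rank functions along `K` shows that they agree on `K`; hence `K` contains `⊥`
and every cover in `K` is a cover in `L`. In a distributive lattice join irreducibles are join
prime, which makes `w x` join irreducible in `K`. Moreover, below a cover `z ⋖ u` of `L` there is
exactly one join irreducible `x ≤ u` with `x ≰ z`; taking for `z ⋖ u` the cover of `u` inside `K`,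
this `x` is the unique join irreducible with `w x = u`.
-/

/-- `CovByIn K x y`: `y` covers `x` within the subposet `K` (induced order). -/
def CovByIn {L : Type*} [Lattice L] (K : Set L) (x y : L) : Prop :=
  x ∈ K ∧ y ∈ K ∧ x < y ∧ ∀ z ∈ K, x < z → ¬ z < y

/-- Join irreducibility in a lattice with least element `⊥`. -/
def JoinIrred {L : Type*} [Lattice L] [OrderBot L] (x : L) : Prop :=
  x ≠ ⊥ ∧ ∀ y z : L, x = y ⊔ z → x = y ∨ x = z

/-- Join irreducibility within a sublattice `K` whose minimum element is `mK`. -/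
def JoinIrredIn {L : Type*} [Lattice L] (K : Set L) (mK : L) (w : L) : Prop :=
  w ∈ K ∧ w ≠ mK ∧ ∀ y ∈ K, ∀ z ∈ K, w = y ⊔ z → w = y ∨ w = z

section FiniteOrder

variable {α β : Type*} [PartialOrder α] [Finite α] [Preorder β]

theorem monotone_of_forall_covBy {f : α → β} (hf : ∀ a b, a ⋖ b → f a ≤ f b) : Monotone f := by
  have := Fintype.ofFinite α
  classical
  let _ := Fintype.toLocallyFiniteOrder (α := α)
  exact (monotone_iff_forall_covBy f).2 hf

theorem strictMono_of_forall_covBy {f : α → β} (hf : ∀ a b, a ⋖ b → f a < f b) :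
    StrictMono f := by
  have := Fintype.ofFinite α
  classical
  let _ := Fintype.toLocallyFiniteOrder (α := α)
  exact (strictMono_iff_forall_covBy f).2 hf

theorem exists_le_covBy_of_lt_of_finite {a b : α} (h : a < b) : ∃ c, a ≤ c ∧ c ⋖ b := by
  have := Fintype.ofFinite α
  classical
  let _ := Fintype.toLocallyFiniteOrder (α := α)
  exact exists_le_covBy_of_lt h

theorem monotone_sub_of_covBy_eq_add_one {f g : α → ℕ} (hf : ∀ a b, a ⋖ b → f b = f a + 1)
    (hg : StrictMono g) : Monotone fun a => (g a : ℤ) - f a :=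
  monotone_of_forall_covBy fun a b hab => by
    have := hf a b hab
    have := hg hab.lt
    omega

end FiniteOrder

theorem covBy_of_strictMono_of_eq_add_one {α : Type*} [Preorder α] {ρ : α → ℕ} (hρ : StrictMono ρ)
    {a b : α} (hab : a < b) (h : ρ b = ρ a + 1) : a ⋖ b :=
  ⟨hab, fun c hac hcb => by have := hρ hac; have := hρ hcb; omega⟩

section Sublattice

variable {L : Type*} [Lattice L] {K : Set L}

theorem covByIn_iff_covBy {a b : K} : CovByIn K a b ↔ a ⋖ b := by
  obtain ⟨a, ha⟩ := a
  obtain ⟨b, hb⟩ := b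
  simp [CovByIn, CovBy, ha, hb]

theorem exists_covByIn_of_lt [Finite L] {a b : L} (ha : a ∈ K) (hb : b ∈ K) (hab : a < b) :
    ∃ c, a ≤ c ∧ CovByIn K c b := by
  obtain ⟨c, hac, hcb⟩ :=
    exists_le_covBy_of_lt_of_finite (α := K) (a := ⟨a, ha⟩) (b := ⟨b, hb⟩) hab
  exact ⟨c, hac, covByIn_iff_covBy.2 hcb⟩

theorem InfClosed.isLeast_of_forall_not_lt (hK : InfClosed K) {x w : L} (hw : w ∈ K)
    (hxw : x ≤ w) (hmin : ∀ y ∈ K, x ≤ y → ¬ y < w) : IsLeast {y | y ∈ K ∧ x ≤ y} w :=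
  ⟨⟨hw, hxw⟩, fun y ⟨hy, hxy⟩ => by
    by_contra h
    exact hmin _ (hK hw hy) (le_inf hxw hxy) (inf_lt_left.2 h)⟩

end Sublattice

theorem rank_eq_of_covByIn_eq_add_one {L : Type*} [Lattice L] [OrderTop L] [Finite L]
    {ρL : L → ℕ} (hρL : StrictMono ρL) {K : Set L} {mK MK : L} (hmK : mK ∈ K) (hMK : MK ∈ K)
    (hmin : ∀ x ∈ K, mK ≤ x) (hmax : ∀ x ∈ K, x ≤ MK) {ρK : L → ℕ} (hKbot : ρK mK = 0)
    (hKcov : ∀ x y, CovByIn K x y → ρK y = ρK x + 1) (hlen : ρK MK = ρL ⊤) :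
    ∀ u ∈ K, ρK u = ρL u := by
  -- `ρL - ρK` is monotone on `K`, `≥ 0` at `mK` and `≤ 0` at `MK`, hence zero.
  have hmono : Monotone fun u : K => (ρL u : ℤ) - ρK u :=
    monotone_sub_of_covBy_eq_add_one (fun a b hab => hKcov a b (covByIn_iff_covBy.2 hab))
      (hρL.comp (Subtype.strictMono_coe _))
  intro u hu
  have hlow := hmono (show (⟨mK, hmK⟩ : K) ≤ ⟨u, hu⟩ from hmin u hu)
  have hhigh := hmono (show (⟨u, hu⟩ : K) ≤ ⟨MK, hMK⟩ from hmax u hu)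
  have htop := hρL.monotone (le_top : MK ≤ ⊤)
  simp only at hlow hhigh
  omega

section JoinIrred

variable {L : Type*} [Lattice L]

theorem CovBy.sup_eq_of_le_of_not_le {a b x : L} (hab : a ⋖ b) (hxb : x ≤ b) (hxa : ¬ x ≤ a) :
    a ⊔ x = b :=
  (hab.eq_or_eq le_sup_left (sup_le hab.le hxb)).resolve_left fun h => hxa (h ▸ le_sup_right)

variable [OrderBot L]

theorem joinIrred_iff_supIrred {x : L} : JoinIrred x ↔ SupIrred x := by
  rw [JoinIrred, SupIrred, isMin_iff_eq_bot]
  exact and_congr Iff.rfl ⟨fun h _ _ hyz => (h _ _ hyz.symm).imp Eq.symm Eq.symm,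
    fun h _ _ hyz => (h hyz.symm).imp Eq.symm Eq.symm⟩

theorem exists_joinIrred_le_not_le [Finite L] {a b : L} (h : ¬ b ≤ a) :
    ∃ x, JoinIrred x ∧ x ≤ b ∧ ¬ x ≤ a := by
  obtain ⟨s, rfl, hs⟩ := exists_supIrred_decomposition b
  by_contra! H
  exact h <| Finset.sup_le fun x hx =>
    H x (joinIrred_iff_supIrred.2 (hs hx)) (Finset.le_sup (f := id) hx)

end JoinIrred

section Distrib

variable {L : Type*} [DistribLattice L] [OrderBot L]

theorem JoinIrred.supPrime {x : L} (hx : JoinIrred x) : SupPrime x :=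
  (joinIrred_iff_supIrred.1 hx).supPrime

theorem CovBy.joinIrred_eq {a b x x' : L} (hab : a ⋖ b) (hx : JoinIrred x) (hx' : JoinIrred x')
    (hxb : x ≤ b) (hxa : ¬ x ≤ a) (hx'b : x' ≤ b) (hx'a : ¬ x' ≤ a) : x = x' := by
  have hle : ∀ y y', JoinIrred y → y ≤ b → ¬ y ≤ a → y' ≤ b → ¬ y' ≤ a → y ≤ y' :=
    fun y y' hy hyb hya hy'b hy'a =>
      (hy.supPrime.le_sup.1 ((hab.sup_eq_of_le_of_not_le hy'b hy'a).symm ▸ hyb)).resolve_left hya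
  exact le_antisymm (hle x x' hx hxb hxa hx'b hx'a) (hle x' x hx' hx'b hx'a hxb hxa)

theorem JoinIrred.joinIrredIn_of_isLeast {K : Set L} {x u : L} (hx : JoinIrred x)
    (hu : IsLeast {y | y ∈ K ∧ x ≤ y} u) : JoinIrredIn K ⊥ u := by
  refine ⟨hu.1.1, fun h => hx.1 (le_bot_iff.1 (h ▸ hu.1.2)), fun y hy z hz hyz => ?_⟩
  rcases hx.supPrime.le_sup.1 (hyz ▸ hu.1.2) with hxy | hxz
  · exact .inl ((hu.2 ⟨hy, hxy⟩).antisymm (hyz ▸ le_sup_left))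
  · exact .inr ((hu.2 ⟨hz, hxz⟩).antisymm (hyz ▸ le_sup_right))

end Distrib

theorem IsLeast.eq_of_covByIn {L : Type*} [Lattice L] {K : Set L} (hK : SupClosed K)
    {m u z x v : L} (hv : IsLeast {y | y ∈ K ∧ x ≤ y} v) (hu : JoinIrredIn K m u)
    (hzu : CovByIn K z u) (hxu : x ≤ u) (hxz : ¬ x ≤ z) : v = u := by
  obtain ⟨hz, -, hzu, hzu_cov⟩ := hzu
  have hvu : v ≤ u := hv.2 ⟨hu.1, hxu⟩
  have hzv : z < z ⊔ v := left_lt_sup.2 fun h => hxz (hv.1.2.trans h)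
  have hsup : z ⊔ v = u :=
    (sup_le hzu.le hvu).eq_of_not_lt (hzu_cov _ (hK hz hv.1.1) hzv)
  exact ((hu.2.2 z hz v hv.1.1 hsup.symm).resolve_left hzu.ne').symm

theorem IsLeast.not_le_of_lt {L : Type*} [Lattice L] {K : Set L} {x u z : L}
    (hu : IsLeast {y | y ∈ K ∧ x ≤ y} u) (hz : z ∈ K) (hzu : z < u) : ¬ x ≤ z :=
  fun h => hzu.not_ge (hu.2 ⟨hz, h⟩)

theorem stmt_13_general {L : Type*} [DistribLattice L] [BoundedOrder L] [Fintype L]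
    (ρL : L → ℕ) (hcov : ∀ x y : L, x ⋖ y → ρL y = ρL x + 1)
    (K : Set L) (hK : ∀ x ∈ K, ∀ y ∈ K, x ⊔ y ∈ K ∧ x ⊓ y ∈ K)
    (mK MK : L) (hmK : mK ∈ K) (hMK : MK ∈ K)
    (hmin : ∀ x ∈ K, mK ≤ x) (hmax : ∀ x ∈ K, x ≤ MK)
    (ρK : L → ℕ) (hKbot : ρK mK = 0)
    (hKcov : ∀ x y : L, CovByIn K x y → ρK y = ρK x + 1)
    (hlen : ρK MK = ρL ⊤)
    (w : L → L)
    (hw : ∀ x : L, JoinIrred x →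
      w x ∈ K ∧ x ≤ w x ∧ ∀ y ∈ K, x ≤ y → ¬ y < w x) :
    (∀ x : L, JoinIrred x → JoinIrredIn K mK (w x)) ∧
    (∀ x x' : L, JoinIrred x → JoinIrred x' → w x = w x' → x = x') ∧
    (∀ u : L, JoinIrredIn K mK u → ∃ x : L, JoinIrred x ∧ w x = u) ∧
    (∀ x x' : L, JoinIrred x → JoinIrred x' → x ≤ x' → w x ≤ w x') := by
  have hρL : StrictMono ρL :=
    strictMono_of_forall_covBy fun x y hxy => (hcov x y hxy).symm ▸ Nat.lt_succ_self _
  have hrank := rank_eq_of_covByIn_eq_add_one hρL hmK hMK hmin hmax hKbot hKcov hlen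
  have hcovK (x y : L) (hxy : CovByIn K x y) : x ⋖ y :=
    covBy_of_strictMono_of_eq_add_one hρL hxy.2.2.1
      (by rw [← hrank x hxy.1, ← hrank y hxy.2.1, hKcov x y hxy])
  obtain rfl : mK = ⊥ := by
    by_contra h
    have := hρL (bot_lt_iff_ne_bot.2 h)
    rw [← hrank mK hmK, hKbot] at this
    omega
  have hsup : SupClosed K := fun a ha b hb => (hK a ha b hb).1
  have hinf : InfClosed K := fun a ha b hb => (hK a ha b hb).2
  have hleast (x : L) (hx : JoinIrred x) : IsLeast {y | y ∈ K ∧ x ≤ y} (w x) :=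
    have ⟨hwK, hxw, hwmin⟩ := hw x hx
    hinf.isLeast_of_forall_not_lt hwK hxw hwmin
  have hirr (x : L) (hx : JoinIrred x) : JoinIrredIn K ⊥ (w x) :=
    hx.joinIrredIn_of_isLeast (hleast x hx)
  refine ⟨hirr, fun x x' hx hx' hxx' => ?_, fun u hu => ?_, fun x x' hx hx' hxx' => ?_⟩
  · obtain ⟨z, -, hzw⟩ :=
      exists_covByIn_of_lt hmK (hirr x hx).1 (bot_lt_iff_ne_bot.2 (hirr x hx).2.1)
    exact (hcovK _ _ hzw).joinIrred_eq hx hx' (hleast x hx).1.2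
      ((hleast x hx).not_le_of_lt hzw.1 hzw.2.2.1) (hxx' ▸ (hleast x' hx').1.2)
      ((hleast x' hx').not_le_of_lt hzw.1 (hxx' ▸ hzw.2.2.1))
  · obtain ⟨z, -, hzu⟩ := exists_covByIn_of_lt hmK hu.1 (bot_lt_iff_ne_bot.2 hu.2.1)
    obtain ⟨x, hx, hxu, hxz⟩ := exists_joinIrred_le_not_le (hcovK z u hzu).lt.not_ge
    exact ⟨x, hx, (hleast x hx).eq_of_covByIn hsup hu hzu hxu hxz⟩
  · exact (hleast x hx).2 ⟨(hleast x' hx').1.1, hxx'.trans (hleast x' hx').1.2⟩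

theorem stmt_13 {L : Type*} [DistribLattice L] [BoundedOrder L] [Fintype L]
    (ρL : L → ℕ) (hbot : ρL ⊥ = 0) (hcov : ∀ x y : L, x ⋖ y → ρL y = ρL x + 1)
    (K : Set L) (hK : ∀ x ∈ K, ∀ y ∈ K, x ⊔ y ∈ K ∧ x ⊓ y ∈ K)
    (mK MK : L) (hmK : mK ∈ K) (hMK : MK ∈ K)
    (hmin : ∀ x ∈ K, mK ≤ x) (hmax : ∀ x ∈ K, x ≤ MK)
    (ρK : L → ℕ) (hKbot : ρK mK = 0)
    (hKcov : ∀ x y : L, CovByIn K x y → ρK y = ρK x + 1)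
    (hlen : ρK MK = ρL ⊤)
    (w : L → L)
    (hw : ∀ x : L, JoinIrred x →
      w x ∈ K ∧ x ≤ w x ∧ ∀ y ∈ K, x ≤ y → ¬ y < w x) :
    (∀ x : L, JoinIrred x → JoinIrredIn K mK (w x)) ∧
    (∀ x x' : L, JoinIrred x → JoinIrred x' → w x = w x' → x = x') ∧
    (∀ u : L, JoinIrredIn K mK u → ∃ x : L, JoinIrred x ∧ w x = u) ∧
    (∀ x x' : L, JoinIrred x → JoinIrred x' → x ≤ x' → w x ≤ w x') :=
  stmt_13_general ρL hcov K hK mK MK hmK hMK hmin hmax ρK hKbot hKcov hlen w hw
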